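/- arXiv:1211.0419 — 2 statements merged into one kernel-verified Lean document; each statement's English description precedes it below -/
import Mathlib

section
/- Let A ⊆ Y with ∅ ≠ Cl₊A ≠ Y. Then A + Int C = Inf A + Int C. -/
open Set Pointwise

variable {Y : Type*} [AddCommGroup Y] [Module ℝ Y] [TopologicalSpace Y]
  [IsTopologicalAddGroup Y] [ContinuousSMul ℝ Y]

/-- Upper closure of a set with respect to the cone `C`. -/
def upClo (C A : Set Y) : Set Y := closure (A + C)

/-- Weakly minimal elements of `A` with respect to the cone `C`. -/
def wMinSet (C A : Set Y) : Set Y := {y ∈ A | ({y} - interior C) ∩ A = ∅}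

/-- Infimal set of `A` with respect to the cone `C`. -/
def infSet (C A : Set Y) : Set Y := wMinSet C (upClo C A)

/-!
Write `B := Cl₊A`. Since `interior C` is open and `C + interior C ⊆ interior C`, we have
`B + interior C = A + interior C`, and `B` absorbs `interior C`. Given `b ∈ B` and
`c ∈ interior C`, move from `x := b + c` down the ray `x - t • c`: the set of `t` with
`x - t • c ∈ B` is closed, contains `1`, and is bounded above, since otherwise `B` would absorb
the whole space (every `v + t • c` lies in `interior C` for `t` large). At the largest such `t`
the point `x - t • c` is weakly minimal in `B`, because a point of `B` strictly below it could be
pushed further down the ray, and `x` lies above it by `t • c ∈ interior C`.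
-/

section Cone

variable {E : Type*} [AddCommGroup E] [Module ℝ E] {C : Set E}

theorem add_self_subset_of_convex (hC : Convex ℝ C) (hCone : ∀ r : ℝ, 0 < r → r • C ⊆ C) :
    C + C ⊆ C := by
  rintro _ ⟨x, hx, y, hy, rfl⟩
  have hmid : (1 / 2 : ℝ) • x + (1 / 2 : ℝ) • y ∈ C :=
    hC hx hy (by norm_num) (by norm_num) (by norm_num)
  have h := hCone 2 two_pos (smul_mem_smul_set hmid)
  rwa [smul_add, smul_smul, smul_smul, show (2 : ℝ) * (1 / 2) = 1 by norm_num, one_smul,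
    one_smul] at h

variable [TopologicalSpace E]

theorem smul_interior_subset_of_smul_subset [ContinuousConstSMul ℝ E]
    (hCone : ∀ r : ℝ, 0 < r → r • C ⊆ C) {r : ℝ} (hr : 0 < r) :
    r • interior C ⊆ interior C :=
  interior_maximal ((smul_set_mono interior_subset).trans (hCone r hr))
    (isOpen_interior.smul₀ hr.ne')

theorem add_interior_subset_interior [ContinuousAdd E] (hC : Convex ℝ C)
    (hCone : ∀ r : ℝ, 0 < r → r • C ⊆ C) : C + interior C ⊆ interior C :=
  interior_maximal
    ((add_subset_add_left interior_subset).trans (add_self_subset_of_convex hC hCone))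
    isOpen_interior.add_left

theorem eventually_add_smul_mem_interior [ContinuousAdd E] [ContinuousSMul ℝ E]
    (hCone : ∀ r : ℝ, 0 < r → r • C ⊆ C) {c : E} (hc : c ∈ interior C) (v : E) :
    ∀ᶠ t : ℝ in Filter.atTop, v + t • c ∈ interior C := by
  have hlim : Filter.Tendsto (fun t : ℝ => t⁻¹ • v + c) Filter.atTop (nhds c) := by
    simpa using ((tendsto_inv_atTop_zero (𝕜 := ℝ)).smul_const v).add_const c
  filter_upwards [hlim.eventually (isOpen_interior.mem_nhds hc), Filter.eventually_gt_atTop 0]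
    with t ht htpos
  have hmem := smul_interior_subset_of_smul_subset hCone htpos (smul_mem_smul_set ht)
  rwa [smul_add, smul_inv_smul₀ htpos.ne'] at hmem

end Cone

section UpperClosure

variable {E : Type*} [AddCommGroup E] [TopologicalSpace E]

theorem add_interior_subset_upClo (C A : Set E) : A + interior C ⊆ upClo C A :=
  (add_subset_add_left interior_subset).trans subset_closure

end UpperClosure

theorem upClo_add_interior {C : Set Y} (hC : Convex ℝ C) (hCone : ∀ r : ℝ, 0 < r → r • C ⊆ C)
    (A : Set Y) : upClo C A + interior C = A + interior C := by
  refine Subset.antisymm ?_ ?_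
  · calc upClo C A + interior C = A + C + interior C := isOpen_interior.closure_add _
      _ = A + (C + interior C) := add_assoc _ _ _
      _ ⊆ A + interior C := add_subset_add_left (add_interior_subset_interior hC hCone)
  · rintro _ ⟨a, ha, c, hc, rfl⟩
    have hc2 : (2⁻¹ : ℝ) • c ∈ interior C :=
      smul_interior_subset_of_smul_subset hCone (by norm_num) (smul_mem_smul_set hc)
    refine ⟨a + (2⁻¹ : ℝ) • c, add_interior_subset_upClo C A (add_mem_add ha hc2), _, hc2, ?_⟩
    change a + _ + _ = a + c
    rw [add_assoc, ← add_smul, show (2⁻¹ + 2⁻¹ : ℝ) = 1 by norm_num, one_smul]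

section WeakMinimal

variable {C B : Set Y}

theorem bddAbove_ray_of_add_interior_subset (hCone : ∀ r : ℝ, 0 < r → r • C ⊆ C)
    (hBC : B + interior C ⊆ B) (hB : B ≠ univ) {c : Y} (hc : c ∈ interior C) (x : Y) :
    BddAbove {t : ℝ | x - t • c ∈ B} := by
  by_contra hunbdd
  refine hB (eq_univ_of_forall fun w => ?_)
  obtain ⟨M, hM⟩ := Filter.eventually_atTop.1 (eventually_add_smul_mem_interior hCone hc (w - x))
  obtain ⟨t, ht, hMt⟩ := not_bddAbove_iff.1 hunbdd M
  have hw := hBC (add_mem_add ht (hM t hMt.le))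
  rwa [show x - t • c + (w - x + t • c) = w by abel] at hw

theorem mem_wMinSet_of_isGreatest (hBC : B + interior C ⊆ B) {c x : Y} {t : ℝ}
    (ht : IsGreatest {t : ℝ | x - t • c ∈ B} t) : x - t • c ∈ wMinSet C B := by
  refine ⟨ht.1, eq_empty_of_forall_notMem ?_⟩
  rintro _ ⟨⟨_, rfl, d, hd, rfl⟩, hz⟩
  have hnear : ∀ᶠ ε : ℝ in nhds 0, d - ε • c ∈ interior C :=
    ((continuous_const.sub (continuous_id.smul continuous_const)).tendsto' 0 d
      (by simp)).eventually (isOpen_interior.mem_nhds hd)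
  obtain ⟨ε, hdε, hε⟩ :=
    ((hnear.filter_mono nhdsWithin_le_nhds).and (self_mem_nhdsWithin (s := Ioi 0))).exists
  have hmem := hBC (add_mem_add hz hdε)
  rw [show x - t • c - d + (d - ε • c) = x - (t + ε) • c by rw [add_smul]; abel] at hmem
  linarith [ht.2 hmem, show (0 : ℝ) < ε from hε]

theorem exists_mem_wMinSet_sub_mem_interior (hCone : ∀ r : ℝ, 0 < r → r • C ⊆ C)
    (hB : IsClosed B) (hBC : B + interior C ⊆ B) (hBne : B ≠ univ) {b c : Y} (hb : b ∈ B)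
    (hc : c ∈ interior C) : ∃ m ∈ wMinSet C B, b + c - m ∈ interior C := by
  set T := {t : ℝ | b + c - t • c ∈ B}
  have h1T : (1 : ℝ) ∈ T := by simpa [T] using hb
  have hT : IsClosed T := hB.preimage (by fun_prop)
  have hmax := hT.isGreatest_csSup ⟨1, h1T⟩
    (bddAbove_ray_of_add_interior_subset hCone hBC hBne hc (b + c))
  refine ⟨_, mem_wMinSet_of_isGreatest hBC hmax, ?_⟩
  rw [sub_sub_cancel]
  exact smul_interior_subset_of_smul_subset hCone (one_pos.trans_le (hmax.2 h1T))
    (smul_mem_smul_set hc)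

theorem add_interior_eq_wMinSet_add_interior (hCone : ∀ r : ℝ, 0 < r → r • C ⊆ C)
    (hB : IsClosed B) (hBC : B + interior C ⊆ B) (hBne : B ≠ univ) :
    B + interior C = wMinSet C B + interior C := by
  refine Subset.antisymm ?_ (add_subset_add_right fun _ hm => hm.1)
  rintro _ ⟨b, hb, c, hc, rfl⟩
  obtain ⟨m, hm, hmc⟩ := exists_mem_wMinSet_sub_mem_interior hCone hB hBC hBne hb hc
  exact ⟨m, hm, _, hmc, add_sub_cancel _ _⟩

end WeakMinimal

theorem stmt_2_general (C A : Set Y) (hC : Convex ℝ C)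
    (hCone : ∀ r : ℝ, 0 < r → r • C ⊆ C)
    (h2 : upClo C A ≠ univ) :
    A + interior C = infSet C A + interior C := by
  have hB : upClo C A + interior C ⊆ upClo C A :=
    (upClo_add_interior hC hCone A).subset.trans (add_interior_subset_upClo C A)
  rw [← upClo_add_interior hC hCone A]
  exact add_interior_eq_wMinSet_add_interior hCone isClosed_closure hB h2

theorem stmt_2 (C A : Set Y) (hC : Convex ℝ C)
    (hCone : ∀ r : ℝ, 0 < r → r • C ⊆ C)
    (hInt : (interior C).Nonempty) (hIntNe : interior C ≠ univ)
    (h1 : (upClo C A).Nonempty) (h2 : upClo C A ≠ univ) :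
    A + interior C = infSet C A + interior C :=
  stmt_2_general C A hC hCone h2
end

section
/- Let A, B ⊆ Y with ∅ ≠ Cl₊A ≠ Y and ∅ ≠ Cl₊B ≠ Y, and suppose ∅ ≠ Cl₊(A+B) ≠ Y. Then Inf(Inf A + Inf B) = Inf(A + B). -/
open Set Pointwise

variable {Y : Type*} [AddCommGroup Y] [Module ℝ Y] [TopologicalSpace Y]
  [IsTopologicalAddGroup Y] [ContinuousSMul ℝ Y]

open Filter Topology

/-!
For `y ∈ upClo C A` and `d ∈ interior C`, push `y` along `-d` as far as it stays in the closed set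
`upClo C A`. The endpoint `w = y - t₀ • d` is weakly minimal (otherwise one could go further), and
`y` is the limit of `w + (t₀ + ε) • d ∈ infSet C A + C`; hence `upClo C (infSet C A) = upClo C A`.
Since `upClo C (A + B)` depends only on `upClo C A` and `upClo C B`, the sets
`infSet C A + infSet C B` and `A + B` have the same upper closure, hence the same infimal set.
-/

theorem closure_add_closure_subset {G : Type*} [Add G] [TopologicalSpace G] [ContinuousAdd G]
    (s t : Set G) : closure s + closure t ⊆ closure (s + t) := by
  rintro _ ⟨a, ha, b, hb, rfl⟩
  exact map_mem_closure₂ continuous_add ha hb fun p hp q hq => ⟨p, hp, q, hq, rfl⟩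

theorem Convex.add_self_subset {E : Type*} [AddCommGroup E] [Module ℝ E] {C : Set E}
    (hC : Convex ℝ C) (hCone : ∀ r : ℝ, 0 < r → r • C ⊆ C) : C + C ⊆ C :=
  calc C + C = (1 + 1 : ℝ) • C := by rw [hC.add_smul zero_le_one zero_le_one, one_smul]
    _ ⊆ C := hCone _ (by norm_num)

section TopologicalAddGroup

variable {G : Type*} [AddCommGroup G] [TopologicalSpace G] {C A B : Set G}

theorem mem_wMinSet_iff {F : Set G} {y : G} :
    y ∈ wMinSet C F ↔ y ∈ F ∧ y ∉ F + interior C := by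
  refine and_congr_right fun _ => ?_
  rw [eq_empty_iff_forall_notMem]
  constructor
  · rintro h ⟨f, hf, e, he, rfl⟩
    exact h f ⟨⟨f + e, rfl, e, he, add_sub_cancel_right f e⟩, hf⟩
  · rintro h z ⟨⟨w, hw, e, he, rfl⟩, hz⟩
    rw [mem_singleton_iff] at hw
    subst hw
    exact h ⟨w - e, hz, e, he, sub_add_cancel w e⟩

variable [ContinuousAdd G]

theorem upClo_add_cone_subset (hCC : C + C ⊆ C) : upClo C A + C ⊆ upClo C A :=
  calc upClo C A + C ⊆ closure (A + C) + closure C := add_subset_add_left subset_closure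
    _ ⊆ closure (A + C + C) := closure_add_closure_subset _ _
    _ ⊆ upClo C A := closure_mono <| by rw [add_assoc]; exact add_subset_add_left hCC

theorem upClo_subset_upClo (hCC : C + C ⊆ C) {A' : Set G} (h : A ⊆ upClo C A') :
    upClo C A ⊆ upClo C A' :=
  closure_minimal ((add_subset_add_right h).trans (upClo_add_cone_subset hCC)) isClosed_closure

theorem upClo_add_upClo_subset (hCC : C + C ⊆ C) :
    upClo C A + upClo C B ⊆ upClo C (A + B) :=
  (closure_add_closure_subset _ _).trans <| closure_mono <| by
    rw [add_add_add_comm]; exact add_subset_add_left hCC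

end TopologicalAddGroup

section TopologicalVectorSpace

variable {C A B F : Set Y} {d y : Y}

theorem mem_closure_of_forall_pos_add_smul_mem {s : Set Y} {x : Y} (d : Y)
    (h : ∀ ε : ℝ, 0 < ε → x + ε • d ∈ s) : x ∈ closure s := by
  have hlim : Tendsto (fun ε : ℝ => x + ε • d) (𝓝[>] 0) (𝓝 x) := by
    have : Continuous fun ε : ℝ => x + ε • d := by fun_prop
    exact (this.tendsto' 0 x (by simp)).mono_left nhdsWithin_le_nhds
  exact mem_closure_of_tendsto hlim (eventually_mem_nhdsWithin.mono fun ε hε => h ε hε)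

theorem subset_upClo (hCone : ∀ r : ℝ, 0 < r → r • C ⊆ C) (hCne : C.Nonempty) :
    A ⊆ upClo C A := by
  obtain ⟨c, hc⟩ := hCne
  exact fun a ha => mem_closure_of_forall_pos_add_smul_mem c fun ε hε =>
    add_mem_add ha (hCone ε hε (smul_mem_smul_set hc))

theorem upClo_add (hCone : ∀ r : ℝ, 0 < r → r • C ⊆ C) (hCne : C.Nonempty) (hCC : C + C ⊆ C) :
    upClo C (A + B) = upClo C (upClo C A + upClo C B) :=
  (upClo_subset_upClo hCC <|
      (add_subset_add (subset_upClo hCone hCne) (subset_upClo hCone hCne)).trans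
        (subset_upClo hCone hCne)).antisymm
    (upClo_subset_upClo hCC (upClo_add_upClo_subset hCC))

theorem bddAbove_setOf_sub_smul_mem (hCone : ∀ r : ℝ, 0 < r → r • C ⊆ C) (hFC : F + C ⊆ F)
    (hF : F ≠ univ) (hd : d ∈ interior C) : BddAbove {t : ℝ | y - t • d ∈ F} := by
  contrapose! hF
  refine eq_univ_of_forall fun z => ?_
  have hlim : Tendsto (fun t : ℝ => d + t⁻¹ • (z - y)) atTop (𝓝 d) := by
    simpa using tendsto_const_nhds.add ((tendsto_inv_atTop_zero (𝕜 := ℝ)).smul_const (z - y))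
  obtain ⟨t, htF, htC, ht⟩ := ((frequently_atTop.2 fun b =>
      let ⟨t, htF, hbt⟩ := not_bddAbove_iff.1 hF b; ⟨t, hbt.le, htF⟩).and_eventually
    ((hlim.eventually_mem (isOpen_interior.mem_nhds hd)).and (eventually_gt_atTop 0))).exists
  have hz : (y - t • d) + t • (d + t⁻¹ • (z - y)) = z := by
    rw [smul_add, smul_smul, mul_inv_cancel₀ ht.ne', one_smul]; abel
  exact hz ▸ hFC (add_mem_add htF (hCone t ht (smul_mem_smul_set (interior_subset htC))))

theorem sub_smul_mem_wMinSet (hFC : F + C ⊆ F) {t₀ : ℝ}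
    (ht₀ : IsGreatest {t : ℝ | y - t • d ∈ F} t₀) : y - t₀ • d ∈ wMinSet C F := by
  refine mem_wMinSet_iff.2 ⟨ht₀.1, ?_⟩
  rintro ⟨f, hf, e, he, hfe⟩
  have hlim : Tendsto (fun ε : ℝ => e - ε • d) (𝓝[>] 0) (𝓝 e) := by
    have : Continuous fun ε : ℝ => e - ε • d := by fun_prop
    exact (this.tendsto' 0 e (by simp)).mono_left nhdsWithin_le_nhds
  obtain ⟨ε, hεC, hε⟩ := ((hlim.eventually_mem (isOpen_interior.mem_nhds he)).and
    self_mem_nhdsWithin).exists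
  have hmem : y - (t₀ + ε) • d ∈ F := by
    have : y - (t₀ + ε) • d = f + (e - ε • d) := by
      rw [add_smul, ← sub_sub, ← hfe, sub_eq_add_neg, add_assoc, sub_eq_add_neg]
    exact this ▸ hFC (add_mem_add hf (interior_subset hεC))
  linarith [ht₀.2 hmem]

theorem subset_closure_wMinSet_add (hCone : ∀ r : ℝ, 0 < r → r • C ⊆ C) (hFC : F + C ⊆ F)
    (hF : IsClosed F) (hFne : F ≠ univ) (hd : d ∈ interior C) :
    F ⊆ closure (wMinSet C F + C) := by
  intro y hy
  set T := {t : ℝ | y - t • d ∈ F}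
  have h0 : (0 : ℝ) ∈ T := by simpa [T] using hy
  have hT : IsClosed T := hF.preimage (by fun_prop)
  have hmax := hT.isGreatest_csSup ⟨0, h0⟩ (bddAbove_setOf_sub_smul_mem hCone hFC hFne hd)
  have hw := sub_smul_mem_wMinSet hFC hmax
  refine mem_closure_of_forall_pos_add_smul_mem d fun ε hε => ?_
  have hpos : 0 < sSup T + ε := add_pos_of_nonneg_of_pos (hmax.2 h0) hε
  have hy : y + ε • d = (y - sSup T • d) + (sSup T + ε) • d := by rw [add_smul]; abel
  exact hy ▸ add_mem_add hw (hCone _ hpos (smul_mem_smul_set (interior_subset hd)))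

theorem upClo_infSet (hCone : ∀ r : ℝ, 0 < r → r • C ⊆ C) (hCC : C + C ⊆ C)
    (hd : d ∈ interior C) (hA : upClo C A ≠ univ) :
    upClo C (infSet C A) = upClo C A :=
  (upClo_subset_upClo hCC fun _ hy => hy.1).antisymm <|
    subset_closure_wMinSet_add hCone (upClo_add_cone_subset hCC) isClosed_closure hA hd

end TopologicalVectorSpace

theorem stmt_6_general (C A B : Set Y) (hC : Convex ℝ C)
    (hCone : ∀ r : ℝ, 0 < r → r • C ⊆ C)
    (hInt : (interior C).Nonempty)
    (hA2 : upClo C A ≠ univ)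
    (hB2 : upClo C B ≠ univ) :
    infSet C (infSet C A + infSet C B) = infSet C (A + B) := by
  obtain ⟨d, hd⟩ := hInt
  have hCC := hC.add_self_subset hCone
  have hCne : C.Nonempty := ⟨d, interior_subset hd⟩
  have key : upClo C (infSet C A + infSet C B) = upClo C (A + B) := by
    rw [upClo_add hCone hCne hCC, upClo_infSet hCone hCC hd hA2, upClo_infSet hCone hCC hd hB2,
      ← upClo_add hCone hCne hCC]
  exact congrArg (wMinSet C) key

theorem stmt_6 (C A B : Set Y) (hC : Convex ℝ C)
    (hCone : ∀ r : ℝ, 0 < r → r • C ⊆ C)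
    (hInt : (interior C).Nonempty) (hIntNe : interior C ≠ univ)
    (hA1 : (upClo C A).Nonempty) (hA2 : upClo C A ≠ univ)
    (hB1 : (upClo C B).Nonempty) (hB2 : upClo C B ≠ univ)
    (hAB1 : (upClo C (A + B)).Nonempty) (hAB2 : upClo C (A + B) ≠ univ) :
    infSet C (infSet C A + infSet C B) = infSet C (A + B) :=
  stmt_6_general C A B hC hCone hInt hA2 hB2
end
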